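/- arXiv:2310.03877 — 4 statements merged into one kernel-verified Lean document; each statement's English description precedes it below -/
import Mathlib

section
/- Let a < b be real numbers, W : ℝ → ℝ a function that is C¹ on (a,b), and (λ_j) a strictly increasing sequence of real numbers. For each j let f_j : ℝ → ℝ be C² on (a,b), not identically zero on (a,b), and satisfy −f_j''(x) + W(x)·f_j(x) = λ_j·f_j(x) for all x ∈ (a,b). Then for any integer M ≥ 1, any strictly increasing indices k_1 < k_2 < … < k_M, and any nonzero real numbers a_1, …, a_M, the function G(x) = Σ_{i=1}^M a_i·f_{k_i}(x) does not vanish identically on any nonempty open subset of (a,b). -/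
/-!
Applying `-d²/dx² + W` repeatedly to `G = ∑ cᵢ f_{kᵢ}`, which vanishes on `U`, shows that
`∑ cᵢ λ_{kᵢ}^m f_{kᵢ} = 0` on `U` for every `m`. The eigenvalues are distinct, so the Vandermonde
matrix is invertible and each `f_{kᵢ}` vanishes on `U`. Then `f_{kᵢ}` and its derivative vanish at
a point, so by uniqueness for the linear ODE `f'' = (W - λ) f` it vanishes on all of `(a, b)`.
-/

open Set Filter Topology

lemma lipschitzWith_prodMk_snd_mul_fst (q : ℝ) :
    LipschitzWith (max 1 ‖q‖₊) fun p : ℝ × ℝ => (p.2, q * p.1) := by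
  simpa using LipschitzWith.prod_snd.prodMk
    ((lipschitzWith_smul q).comp (LipschitzWith.prod_fst (α := ℝ) (β := ℝ)))

/-- The pair `(f, f')` solves a first-order linear system, which is uniformly Lipschitz on a
compact subinterval containing `x` and `x₀` because `q` is bounded there. -/
lemma eqOn_zero_of_deriv_deriv_eq_mul {a b : ℝ} {q f : ℝ → ℝ} (hq : ContinuousOn q (Ioo a b))
    (hf : ContDiffOn ℝ 2 f (Ioo a b)) (heq : ∀ x ∈ Ioo a b, deriv (deriv f) x = q x * f x)
    {x₀ : ℝ} (hx₀ : x₀ ∈ Ioo a b) (h0 : f x₀ = 0) (h0' : deriv f x₀ = 0) :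
    EqOn f 0 (Ioo a b) := by
  intro x hx
  obtain ⟨a', ha, ha'⟩ := exists_between (lt_min hx.1 hx₀.1)
  obtain ⟨b', hb', hb⟩ := exists_between (max_lt hx.2 hx₀.2)
  have hsub : Icc a' b' ⊆ Ioo a b := Icc_subset_Ioo ha hb
  obtain ⟨C, hC⟩ := isCompact_Icc.exists_bound_of_continuousOn (hq.mono hsub)
  have hlip : ∀ t ∈ Ioo a' b', LipschitzOnWith (max 1 C.toNNReal)
      (fun p : ℝ × ℝ => (p.2, q t * p.1)) univ := by
    intro t ht
    have hCt : ‖q t‖ ≤ C := hC t (Ioo_subset_Icc_self ht)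
    exact ((lipschitzWith_prodMk_snd_mul_fst (q t)).weaken (max_le_max le_rfl
      ((Real.le_toNNReal_iff_coe_le ((norm_nonneg _).trans hCt)).mpr hCt))).lipschitzOnWith
  have hf' : DifferentiableOn ℝ f (Ioo a b) := hf.differentiableOn two_ne_zero
  have hf'' : DifferentiableOn ℝ (deriv f) (Ioo a b) :=
    (hf.deriv_of_isOpen isOpen_Ioo (by norm_num) : ContDiffOn ℝ 1 _ _).differentiableOn one_ne_zero
  have hcauchy : ∀ t ∈ Ioo a' b', HasDerivAt (fun s => (f s, deriv f s))
      (deriv f t, q t * f t) t ∧ (f t, deriv f t) ∈ univ := fun t ht => by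
    have ht' : t ∈ Ioo a b := hsub (Ioo_subset_Icc_self ht)
    refine ⟨?_, mem_univ _⟩
    rw [← heq t ht']
    exact (hf'.differentiableAt (isOpen_Ioo.mem_nhds ht')).hasDerivAt.prodMk
      (hf''.differentiableAt (isOpen_Ioo.mem_nhds ht')).hasDerivAt
  have hzero : ∀ t ∈ Ioo a' b', HasDerivAt (fun _ => ((0 : ℝ), (0 : ℝ)))
      ((0 : ℝ), q t * 0) t ∧ ((0 : ℝ), (0 : ℝ)) ∈ univ := fun t _ => by
    refine ⟨?_, mem_univ _⟩
    rw [mul_zero, ← Prod.zero_eq_mk]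
    exact hasDerivAt_const t _
  have hpair := ODE_solution_unique_of_mem_Ioo hlip ⟨ha'.trans_le (min_le_right _ _),
    (le_max_right _ _).trans_lt hb'⟩ hcauchy hzero (by simp [h0, h0'])
    ⟨ha'.trans_le (min_le_left _ _), (le_max_left _ _).trans_lt hb'⟩
  exact congrArg Prod.fst hpair

lemma deriv_deriv_sum_mul {ι : Type*} [Fintype ι] {U : Set ℝ} (hU : IsOpen U)
    {g : ι → ℝ → ℝ} (hg : ∀ i, ContDiffOn ℝ 2 (g i) U) (c : ι → ℝ) {x : ℝ} (hx : x ∈ U) :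
    deriv (deriv fun y => ∑ i, c i * g i y) x = ∑ i, c i * deriv (deriv (g i)) x := by
  have hg' : ∀ i, ∀ y ∈ U, DifferentiableAt ℝ (g i) y := fun i y hy =>
    ((hg i).differentiableOn two_ne_zero).differentiableAt (hU.mem_nhds hy)
  have hg'' : ∀ i, ∀ y ∈ U, DifferentiableAt ℝ (deriv (g i)) y := fun i y hy =>
    ((hg i).deriv_of_isOpen hU (by norm_num) : ContDiffOn ℝ 1 _ _).differentiableOn one_ne_zero
      |>.differentiableAt (hU.mem_nhds hy)
  have hderiv : deriv (fun y => ∑ i, c i * g i y) =ᶠ[𝓝 x]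
      fun y => ∑ i, c i * deriv (g i) y := by
    filter_upwards [hU.mem_nhds hx] with y hy
    rw [deriv_fun_sum fun i _ => (hg' i y hy).const_mul _]
    exact Finset.sum_congr rfl fun i _ => deriv_const_mul _ (hg' i y hy)
  rw [hderiv.deriv_eq, deriv_fun_sum fun i _ => (hg'' i x hx).const_mul _]
  exact Finset.sum_congr rfl fun i _ => deriv_const_mul _ (hg'' i x hx)

section Eigenfunctions

variable {ι : Type*} [Fintype ι] {U : Set ℝ} {W : ℝ → ℝ} {μ : ι → ℝ} {g : ι → ℝ → ℝ}

lemma sum_mul_eigenvalue_mul_eq_zero (hU : IsOpen U) (hg : ∀ i, ContDiffOn ℝ 2 (g i) U)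
    (heq : ∀ i, ∀ x ∈ U, deriv (deriv (g i)) x = (W x - μ i) * g i x) {c : ι → ℝ}
    (hzero : ∀ x ∈ U, ∑ i, c i * g i x = 0) : ∀ x ∈ U, ∑ i, c i * μ i * g i x = 0 := by
  intro x hx
  have hF : (fun y => ∑ i, c i * g i y) =ᶠ[𝓝 x] fun _ => 0 :=
    eventuallyEq_of_mem (hU.mem_nhds hx) hzero
  calc ∑ i, c i * μ i * g i x
      = W x * ∑ i, c i * g i x - ∑ i, c i * deriv (deriv (g i)) x := by
        rw [Finset.mul_sum, ← Finset.sum_sub_distrib]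
        exact Finset.sum_congr rfl fun i _ => by rw [heq i x hx]; ring
    _ = 0 := by
        rw [hzero x hx, ← deriv_deriv_sum_mul hU hg c hx, hF.deriv.deriv_eq]
        simp

lemma sum_mul_eigenvalue_pow_mul_eq_zero (hU : IsOpen U) (hg : ∀ i, ContDiffOn ℝ 2 (g i) U)
    (heq : ∀ i, ∀ x ∈ U, deriv (deriv (g i)) x = (W x - μ i) * g i x) {c : ι → ℝ}
    (hzero : ∀ x ∈ U, ∑ i, c i * g i x = 0) (m : ℕ) :
    ∀ x ∈ U, ∑ i, c i * μ i ^ m * g i x = 0 := by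
  induction m with
  | zero => simpa using hzero
  | succ m ih =>
    simpa only [pow_succ, mul_assoc] using sum_mul_eigenvalue_mul_eq_zero hU hg heq ih

end Eigenfunctions

lemma eqOn_zero_of_sum_mul_eigenfunction_eq_zero {n : ℕ} {U : Set ℝ} {W : ℝ → ℝ}
    {μ : Fin n → ℝ} {g : Fin n → ℝ → ℝ} (hU : IsOpen U) (hg : ∀ i, ContDiffOn ℝ 2 (g i) U)
    (heq : ∀ i, ∀ x ∈ U, deriv (deriv (g i)) x = (W x - μ i) * g i x)
    (hμ : Function.Injective μ) {c : Fin n → ℝ} (hc : ∀ i, c i ≠ 0)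
    (hzero : ∀ x ∈ U, ∑ i, c i * g i x = 0) (i : Fin n) : EqOn (g i) 0 U := by
  intro x hx
  have hcoeff := Matrix.eq_zero_of_forall_pow_sum_mul_pow_eq_zero hμ (v := fun j => c j * g j x)
    fun m => by
      simpa only [mul_right_comm] using sum_mul_eigenvalue_pow_mul_eq_zero hU hg heq hzero m x hx
  exact (mul_eq_zero.mp (congrFun hcoeff i)).resolve_left (hc i)

theorem linear_combination_not_zero_on_open_set_general
    (a b : ℝ)
    (W : ℝ → ℝ) (hW : ContDiffOn ℝ 1 W (Set.Ioo a b))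
    (lam : ℕ → ℝ) (hlam : StrictMono lam)
    (f : ℕ → ℝ → ℝ)
    (hf_smooth : ∀ j, ContDiffOn ℝ 2 (f j) (Set.Ioo a b))
    (hf_nonzero : ∀ j, ∃ x ∈ Set.Ioo a b, f j x ≠ 0)
    (hf_eq : ∀ j, ∀ x ∈ Set.Ioo a b,
      -(deriv (deriv (f j)) x) + W x * f j x = lam j * f j x)
    (M : ℕ) (hM : 1 ≤ M)
    (k : Fin M → ℕ) (hk : StrictMono k)
    (c : Fin M → ℝ) (hc : ∀ i, c i ≠ 0)
    (U : Set ℝ) (hUsub : U ⊆ Set.Ioo a b) (hUopen : IsOpen U) (hUne : U.Nonempty) :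
    ¬ (∀ x ∈ U, (∑ i, c i * f (k i) x) = 0) := by
  intro hvan
  have hsecond : ∀ j, ∀ x ∈ Ioo a b, deriv (deriv (f j)) x = (W x - lam j) * f j x :=
    fun j x hx => by linear_combination -hf_eq j x hx
  obtain ⟨x₀, hx₀⟩ := hUne
  let i₀ : Fin M := ⟨0, hM⟩
  have hvanish : EqOn (f (k i₀)) 0 U :=
    eqOn_zero_of_sum_mul_eigenfunction_eq_zero hUopen (fun i => (hf_smooth (k i)).mono hUsub)
      (fun i x hx => hsecond (k i) x (hUsub hx)) (hlam.comp hk).injective hc hvan i₀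
  have hderiv : deriv (f (k i₀)) x₀ = 0 := by
    rw [(eventuallyEq_of_mem (hUopen.mem_nhds hx₀) hvanish).deriv_eq]
    simp
  obtain ⟨y, hy, hne⟩ := hf_nonzero (k i₀)
  exact hne (eqOn_zero_of_deriv_deriv_eq_mul (hW.continuousOn.sub continuousOn_const)
    (hf_smooth (k i₀)) (hsecond (k i₀)) (hUsub hx₀) (hvanish hx₀) hderiv hy)

/-- A nontrivial linear combination of Sturm–Liouville eigen-solutions on
an interval (a,b) (with strictly increasing eigenvalues and nonzero coefficients)
cannot vanish identically on any nonempty open subset of (a,b). -/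
theorem linear_combination_not_zero_on_open_set
    (a b : ℝ) (hab : a < b)
    (W : ℝ → ℝ) (hW : ContDiffOn ℝ 1 W (Set.Ioo a b))
    (lam : ℕ → ℝ) (hlam : StrictMono lam)
    (f : ℕ → ℝ → ℝ)
    (hf_smooth : ∀ j, ContDiffOn ℝ 2 (f j) (Set.Ioo a b))
    (hf_nonzero : ∀ j, ∃ x ∈ Set.Ioo a b, f j x ≠ 0)
    (hf_eq : ∀ j, ∀ x ∈ Set.Ioo a b,
      -(deriv (deriv (f j)) x) + W x * f j x = lam j * f j x)
    (M : ℕ) (hM : 1 ≤ M)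
    (k : Fin M → ℕ) (hk : StrictMono k)
    (c : Fin M → ℝ) (hc : ∀ i, c i ≠ 0)
    (U : Set ℝ) (hUsub : U ⊆ Set.Ioo a b) (hUopen : IsOpen U) (hUne : U.Nonempty) :
    ¬ (∀ x ∈ U, (∑ i, c i * f (k i) x) = 0) :=
  linear_combination_not_zero_on_open_set_general a b W hW lam hlam f hf_smooth hf_nonzero hf_eq M
    hM k hk c hc U hUsub hUopen hUne
end

section
/- (Pólya–Szegő bound for exponential sums.) Let n ≥ 1, let b_1 < b_2 < … < b_n be real numbers and a_1, …, a_n be nonzero real numbers, and define h : ℝ → ℝ by h(x) = Σ_{i=1}^n a_i·exp(b_i·x). Let C be the number of indices i ∈ {1, …, n−1} such that a_i·a_{i+1} < 0 (the number of sign changes in the coefficient sequence). Then the set {x ∈ ℝ : h(x) = 0} is finite and has at most C elements. -/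
/-!
Induction on the number of sign changes. With no sign change all terms of `h` have the sign of
`a₀`, so `h` has no zero. Otherwise pick a sign change `aⱼ aⱼ₊₁ < 0` and `bⱼ < c < bⱼ₊₁`.
The function `e^{-cx} h(x)` has the same zeros as `h`, and its derivative is the exponential sum
with coefficients `aᵢ (bᵢ - c)`: multiplying by `bᵢ - c` flips the signs of exactly the
coefficients up to `j`, which removes the sign change at `j` and keeps all others. By Rolle's
theorem a differentiable function has at most one zero more than its derivative.
-/

open Finset Real

section ZeroCounting

theorem natCast_le_encard_iff_exists_strictMono {α : Type*} [LinearOrder α] {S : Set α} {k : ℕ} :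
    (k : ℕ∞) ≤ S.encard ↔ ∃ x : Fin k → α, StrictMono x ∧ ∀ i, x i ∈ S := by
  constructor
  · intro hk
    obtain ⟨t, hts, htk⟩ := Set.exists_subset_encard_eq hk
    lift t to Finset α using Set.finite_of_encard_eq_coe htk
    have hcard : t.card = k := by
      exact_mod_cast (Set.encard_coe_eq_coe_finsetCard t).symm.trans htk
    exact ⟨t.orderEmbOfFin hcard, (t.orderEmbOfFin hcard).strictMono,
      fun i => hts (t.orderEmbOfFin_mem hcard i)⟩
  · rintro ⟨x, hx, hxS⟩
    calc (k : ℕ∞) = ENat.card (Fin k) := by simp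
      _ ≤ (Set.range x).encard := hx.injective.encard_range
      _ ≤ S.encard := Set.encard_le_encard (Set.range_subset_iff.mpr hxS)

variable {f f' : ℝ → ℝ}

theorem exists_strictMono_deriv_eq_zero (hf : ∀ x, HasDerivAt f (f' x) x) {k : ℕ}
    (x : Fin (k + 1) → ℝ) (hx : StrictMono x) (hzero : ∀ i, f (x i) = 0) :
    ∃ y : Fin k → ℝ, StrictMono y ∧ ∀ i, f' (y i) = 0 := by
  have hcont : Continuous f := continuous_iff_continuousAt.mpr fun x => (hf x).continuousAt
  have hRolle (i : Fin k) : ∃ y ∈ Set.Ioo (x i.castSucc) (x i.succ), f' y = 0 :=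
    exists_hasDerivAt_eq_zero (hx i.castSucc_lt_succ) hcont.continuousOn
      (by rw [hzero, hzero]) fun t _ => hf t
  choose y hy hy' using hRolle
  refine ⟨y, fun i j hij => ?_, hy'⟩
  calc y i < x i.succ := (hy i).2
    _ ≤ x j.castSucc := hx.monotone (Fin.succ_le_castSucc_iff.mpr hij)
    _ < y j := (hy j).1

theorem encard_zeros_le_encard_zeros_deriv_add_one (hf : ∀ x, HasDerivAt f (f' x) x) :
    {x | f x = 0}.encard ≤ {x | f' x = 0}.encard + 1 := by
  by_contra! hlt
  obtain ⟨m, hm⟩ : ∃ m : ℕ, {x | f' x = 0}.encard = m :=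
    (ENat.ne_top_iff_exists.mp fun htop => by simp [htop] at hlt).imp fun _ h => h.symm
  rw [hm] at hlt
  have hle : ((m + 1 + 1 : ℕ) : ℕ∞) ≤ {x | f x = 0}.encard := by
    exact_mod_cast Order.add_one_le_of_lt hlt
  obtain ⟨x, hx, hzero⟩ := natCast_le_encard_iff_exists_strictMono.mp hle
  obtain ⟨y, hy, hy'⟩ := exists_strictMono_deriv_eq_zero hf x hx hzero
  have hle' := (natCast_le_encard_iff_exists_strictMono (S := {x | f' x = 0})).mpr ⟨y, hy, hy'⟩
  rw [hm, Nat.cast_le] at hle'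
  omega

end ZeroCounting

noncomputable def expSum (n : ℕ) (a b : ℕ → ℝ) (x : ℝ) : ℝ :=
  ∑ i ∈ range n, a i * exp (b i * x)

noncomputable def signChangeSet (n : ℕ) (a : ℕ → ℝ) : Finset ℕ :=
  (range (n - 1)).filter fun i => a i * a (i + 1) < 0

section SignChanges

variable {n j : ℕ} {a : ℕ → ℝ}

theorem add_one_lt_of_mem_signChangeSet (hj : j ∈ signChangeSet n a) : j + 1 < n := by
  have := mem_range.mp (mem_filter.mp hj).1
  omega

theorem mul_pos_of_signChangeSet_eq_empty (ha : ∀ i < n, a i ≠ 0) (h : signChangeSet n a = ∅)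
    {i : ℕ} (hi : i < n) : 0 < a 0 * a i := by
  induction i with
  | zero => exact mul_self_pos.mpr (ha 0 hi)
  | succ m ih =>
    have hnext : 0 < a m * a (m + 1) := by
      refine lt_of_le_of_ne (not_lt.mp fun hneg => ?_) (mul_ne_zero (ha m (by omega)) (ha _ hi)).symm
      have : m ∈ signChangeSet n a := mem_filter.mpr ⟨mem_range.mpr (by omega), hneg⟩
      simp [h] at this
    nlinarith [mul_pos (ih (by omega)) hnext, mul_self_pos.mpr (ha m (by omega))]

theorem signChangeSet_mul_eq_erase {d : ℕ → ℝ} (hj : j ∈ signChangeSet n a)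
    (hd : ∀ i < n - 1, i ≠ j → 0 < d i * d (i + 1)) (hdj : d j * d (j + 1) < 0) :
    signChangeSet n (fun i => a i * d i) = (signChangeSet n a).erase j := by
  ext i
  simp only [signChangeSet, mem_filter, mem_erase, mem_range] at hj ⊢
  have hprod : a i * d i * (a (i + 1) * d (i + 1)) = a i * a (i + 1) * (d i * d (i + 1)) := by
    ring
  rw [hprod]
  by_cases hij : i = j
  · subst hij
    simp only [ne_eq, not_true_eq_false, false_and, iff_false, not_and, not_lt]
    exact fun _ => (mul_pos_of_neg_of_neg hj.2 hdj).le
  · have hsign (hi : i < n - 1) :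
        a i * a (i + 1) * (d i * d (i + 1)) < 0 ↔ a i * a (i + 1) < 0 := by
      simp only [← not_le, mul_nonneg_iff_of_pos_right (hd i hi hij)]
    exact ⟨fun ⟨hi, hneg⟩ => ⟨hij, hi, (hsign hi).mp hneg⟩,
      fun ⟨_, hi, hneg⟩ => ⟨hi, (hsign hi).mpr hneg⟩⟩

variable {b : ℕ → ℝ} {c : ℝ}

theorem sub_neg_of_le_of_mem_Ioo (hb : StrictMonoOn b (Set.Iio n)) (hjn : j < n)
    (hc : c ∈ Set.Ioo (b j) (b (j + 1))) {i : ℕ} (hij : i ≤ j) : b i - c < 0 :=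
  sub_neg.mpr ((hb.monotoneOn (hij.trans_lt hjn) hjn hij).trans_lt hc.1)

theorem sub_pos_of_lt_of_mem_Ioo (hb : StrictMonoOn b (Set.Iio n))
    (hc : c ∈ Set.Ioo (b j) (b (j + 1))) {i : ℕ} (hi : i < n) (hij : j < i) : 0 < b i - c :=
  sub_pos.mpr (hc.2.trans_le (hb.monotoneOn (lt_of_le_of_lt hij hi) hi hij))

end SignChanges

namespace expSum

variable {n : ℕ} {a b : ℕ → ℝ}

theorem hasDerivAt (x : ℝ) :
    HasDerivAt (expSum n a b) (expSum n (fun i => a i * b i) b x) x := by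
  have hterm (i : ℕ) :
      HasDerivAt (fun x => a i * exp (b i * x)) (a i * b i * exp (b i * x)) x := by
    have hlin : HasDerivAt (fun x => b i * x) (b i) x := by
      simpa using (hasDerivAt_id x).const_mul (b i)
    exact (((hasDerivAt_exp (b i * x)).comp x hlin).const_mul (a i)).congr_deriv (by ring)
  exact HasDerivAt.fun_sum fun i _ => hterm i

theorem sub_const (c x : ℝ) :
    expSum n a (fun i => b i - c) x = exp (-(c * x)) * expSum n a b x := by
  simp only [expSum, mul_sum]
  refine sum_congr rfl fun i _ => ?_
  rw [mul_left_comm, ← exp_add]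
  ring_nf

theorem zeros_sub_const (c : ℝ) :
    {x | expSum n a (fun i => b i - c) x = 0} = {x | expSum n a b x = 0} := by
  ext x
  simp [sub_const, exp_ne_zero]

theorem ne_zero_of_signChangeSet_eq_empty (hn : 1 ≤ n) (ha : ∀ i < n, a i ≠ 0)
    (h : signChangeSet n a = ∅) (x : ℝ) : expSum n a b x ≠ 0 := by
  intro hzero
  have hpos : 0 < a 0 * expSum n a b x := by
    rw [expSum, mul_sum]
    refine sum_pos (fun i hi => ?_) (nonempty_range_iff.mpr (by omega))
    rw [← mul_assoc]
    exact mul_pos (mul_pos_of_signChangeSet_eq_empty ha h (mem_range.mp hi)) (exp_pos _)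
  simp [hzero] at hpos

theorem encard_zeros_le_card_signChangeSet (hn : 1 ≤ n)
    (hb : ∀ i, i + 1 < n → b i < b (i + 1)) (ha : ∀ i < n, a i ≠ 0) :
    {x | expSum n a b x = 0}.encard ≤ (signChangeSet n a).card := by
  obtain ⟨C, hC⟩ : ∃ C, (signChangeSet n a).card = C := ⟨_, rfl⟩
  induction C generalizing a b with
  | zero =>
    simp [ne_zero_of_signChangeSet_eq_empty (b := b) hn ha (card_eq_zero.mp hC)]
  | succ C ih =>
    obtain ⟨j, hj⟩ := card_pos.mp (show 0 < (signChangeSet n a).card by omega)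
    have hjn := add_one_lt_of_mem_signChangeSet hj
    have hmono : StrictMonoOn b (Set.Iio n) :=
      strictMonoOn_of_lt_add_one Set.ordConnected_Iio fun i _ _ hi => hb i hi
    obtain ⟨c, hc⟩ := Set.nonempty_Ioo.mpr (hb j hjn)
    have hbelow {i : ℕ} (hij : i ≤ j) : b i - c < 0 :=
      sub_neg_of_le_of_mem_Ioo hmono (by omega) hc hij
    have habove {i : ℕ} (hi : i < n) (hij : j < i) : 0 < b i - c :=
      sub_pos_of_lt_of_mem_Ioo hmono hc hi hij
    have hcard : (signChangeSet n fun i => a i * (b i - c)).card = C := by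
      rw [signChangeSet_mul_eq_erase hj, card_erase_of_mem hj, hC, Nat.add_sub_cancel]
      · intro i hi hij
        rcases Nat.lt_or_gt_of_ne hij with hij | hij
        · exact mul_pos_of_neg_of_neg (hbelow hij.le) (hbelow hij)
        · exact mul_pos (habove (by omega) hij) (habove (by omega) (by omega))
      · exact mul_neg_of_neg_of_pos (hbelow le_rfl) (habove hjn j.lt_succ_self)
    have ha' (i : ℕ) (hi : i < n) : a i * (b i - c) ≠ 0 := by
      refine mul_ne_zero (ha i hi) ?_
      rcases le_or_gt i j with hij | hij
      · exact (hbelow hij).ne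
      · exact (habove hi hij).ne'
    calc {x | expSum n a b x = 0}.encard
        = {x | expSum n a (fun i => b i - c) x = 0}.encard := by rw [zeros_sub_const]
      _ ≤ {x | expSum n (fun i => a i * (b i - c)) (fun i => b i - c) x = 0}.encard + 1 :=
        encard_zeros_le_encard_zeros_deriv_add_one hasDerivAt
      _ ≤ C + 1 := by
        gcongr
        exact hcard ▸ ih (fun i hi => sub_lt_sub_right (hb i hi) c) ha' hcard
      _ = (signChangeSet n a).card := by rw [hC]; rfl

end expSum

/-- Pólya–Szegő: an exponential sum Σ a_i e^{b_i x} with nonzero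
coefficients and strictly increasing exponents has at most as many real zeros as
sign changes in its coefficient sequence. -/
theorem polya_szego_exponential_sum_zeros
    (n : ℕ) (hn : 1 ≤ n)
    (b : ℕ → ℝ) (hb : ∀ i, i + 1 < n → b i < b (i + 1))
    (a : ℕ → ℝ) (ha : ∀ i < n, a i ≠ 0)
    (h : ℝ → ℝ)
    (hh : ∀ x, h x = ∑ i ∈ Finset.range n, a i * Real.exp (b i * x))
    (C : ℕ)
    (hC : C = ((Finset.range (n - 1)).filter (fun i => a i * a (i + 1) < 0)).card) :
    {x : ℝ | h x = 0}.Finite ∧ {x : ℝ | h x = 0}.ncard ≤ C := by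
  obtain rfl : h = expSum n a b := funext hh
  rw [← Set.encard_le_coe_iff_finite_ncard_le, hC]
  exact expSum.encard_zeros_le_card_signChangeSet hn hb ha
end

section
/- There exists a real number C > 0 such that: (i) sin(2πx) − C·sin(3πx) > 0 for all x ∈ (0, 1/2); and (ii) the function x ↦ sin(2πx) + C·sin(3πx) has exactly one zero in the open interval (0, 1/2), i.e. the set {x ∈ (0,1/2) : sin(2πx) + C·sin(3πx) = 0} has exactly one element. -/
open Real

/-!
Take `C = 2/3` and put `t = π x ∈ (0, π/2)`. Writing `sin 3t = sin t (4 cos² t - 1)`, both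
combinations factor:
`sin 2t - (2/3) sin 3t = (2/3) sin t (1 - cos t) (4 cos t + 1) > 0`, and
`sin 2t + (2/3) sin 3t = (2/3) sin t (4 cos t - 1) (cos t + 1)`, which vanishes exactly when
`cos t = 1/4`, i.e. at `t = arccos (1/4)`.
-/

namespace Real

theorem sin_three_mul_eq_sin_mul (t : ℝ) : sin (3 * t) = sin t * (4 * cos t ^ 2 - 1) := by
  rw [sin_three_mul]
  linear_combination (-4 * sin t) * sin_sq_add_cos_sq t

theorem sin_two_mul_sub_two_thirds_sin_three_mul (t : ℝ) :
    sin (2 * t) - 2 / 3 * sin (3 * t) = 2 / 3 * sin t * (1 - cos t) * (4 * cos t + 1) := by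
  rw [sin_two_mul, sin_three_mul_eq_sin_mul]
  ring

theorem sin_two_mul_add_two_thirds_sin_three_mul (t : ℝ) :
    sin (2 * t) + 2 / 3 * sin (3 * t) = 2 / 3 * sin t * (4 * cos t - 1) * (cos t + 1) := by
  rw [sin_two_mul, sin_three_mul_eq_sin_mul]
  ring

theorem sin_two_mul_sub_two_thirds_sin_three_mul_pos {t : ℝ} (ht : t ∈ Set.Ioo 0 (π / 2)) :
    0 < sin (2 * t) - 2 / 3 * sin (3 * t) := by
  obtain ⟨ht0, htπ⟩ := ht
  have hsin : 0 < sin t := sin_pos_of_pos_of_lt_pi ht0 (by linarith [pi_pos])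
  have hcos : 0 < cos t := cos_pos_of_mem_Ioo ⟨by linarith, htπ⟩
  have hcos_lt : cos t < 1 := by
    rw [← cos_zero]
    exact cos_lt_cos_of_nonneg_of_le_pi le_rfl (by linarith) ht0
  rw [sin_two_mul_sub_two_thirds_sin_three_mul]
  have : 0 < 1 - cos t := by linarith
  positivity

theorem sin_two_mul_add_two_thirds_sin_three_mul_eq_zero_iff {t : ℝ} (ht : t ∈ Set.Ioo 0 π) :
    sin (2 * t) + 2 / 3 * sin (3 * t) = 0 ↔ t = arccos (1 / 4) := by
  have hsin : sin t ≠ 0 := (sin_pos_of_pos_of_lt_pi ht.1 ht.2).ne'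
  have hcos : cos t + 1 ≠ 0 := by
    have := cos_lt_cos_of_nonneg_of_le_pi ht.1.le le_rfl ht.2
    rw [cos_pi] at this
    linarith
  rw [sin_two_mul_add_two_thirds_sin_three_mul]
  simp only [mul_eq_zero, hsin, hcos, or_false, show (2 / 3 : ℝ) ≠ 0 by norm_num, false_or]
  constructor
  · intro h
    rw [← arccos_cos ht.1.le ht.2.le]
    congr 1
    linarith
  · rintro rfl
    rw [cos_arccos (by norm_num) (by norm_num)]
    norm_num

end Real

/-- there is C > 0 with sin(2πx) − C·sin(3πx) > 0 on (0,1/2) and such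
that sin(2πx) + C·sin(3πx) has exactly one zero in (0,1/2). -/
theorem exists_coefficient_sine_combination :
    ∃ C : ℝ, 0 < C ∧
      (∀ x ∈ Set.Ioo (0 : ℝ) (1 / 2),
        Real.sin (2 * π * x) - C * Real.sin (3 * π * x) > 0) ∧
      (∃! x : ℝ, x ∈ Set.Ioo (0 : ℝ) (1 / 2) ∧
        Real.sin (2 * π * x) + C * Real.sin (3 * π * x) = 0) := by
  have mem_iff (x : ℝ) : x ∈ Set.Ioo (0 : ℝ) (1 / 2) ↔ π * x ∈ Set.Ioo 0 (π / 2) := by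
    simp only [Set.mem_Ioo, mul_pos_iff_of_pos_left pi_pos]
    rw [show π / 2 = π * (1 / 2) by ring, mul_lt_mul_iff_right₀ pi_pos]
  have Ioo_pi : Set.Ioo 0 (π / 2) ⊆ Set.Ioo 0 π :=
    Set.Ioo_subset_Ioo_right (half_le_self pi_pos.le)
  refine ⟨2 / 3, by norm_num, fun x hx => ?_, arccos (1 / 4) / π, ?_, ?_⟩
  · simpa only [mul_assoc] using sin_two_mul_sub_two_thirds_sin_three_mul_pos ((mem_iff x).1 hx)
  · have hπx₀ : π * (arccos (1 / 4) / π) = arccos (1 / 4) := mul_div_cancel₀ _ pi_ne_zero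
    have hx₀ : arccos (1 / 4) ∈ Set.Ioo 0 (π / 2) :=
      ⟨arccos_pos.2 (by norm_num), arccos_lt_pi_div_two.2 (by norm_num)⟩
    refine ⟨(mem_iff _).2 (by rwa [hπx₀]), ?_⟩
    simpa only [mul_assoc, hπx₀] using
      (sin_two_mul_add_two_thirds_sin_three_mul_eq_zero_iff (Ioo_pi hx₀)).2 rfl
  · rintro y ⟨hy, hzero⟩
    have hπy :=
      (sin_two_mul_add_two_thirds_sin_three_mul_eq_zero_iff (Ioo_pi ((mem_iff y).1 hy))).1
      (by simpa only [mul_assoc] using hzero)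
    exact eq_div_of_mul_eq pi_ne_zero (by rw [mul_comm, hπy])
end

section
/- Let a < b be real numbers, W : ℝ → ℝ a function that is C¹ on (a,b), and λ_1 < λ_2 < … < λ_M real numbers. For 1 ≤ i ≤ M let f_i : ℝ → ℝ be C² on (a,b), not identically zero on (a,b), with −f_i''(x) + W(x)·f_i(x) = λ_i·f_i(x) for all x ∈ (a,b), and let a_1, …, a_M be nonzero real numbers. Then for every y ∈ ℝ, the function F_y(x) = Σ_{i=1}^M a_i·exp(−λ_i·y)·f_i(x) does not vanish identically on any nonempty open subset of (a,b). -/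
/-!
Apply `L = -d²/dx² + W` repeatedly to a slice `F_y = ∑ dᵢ fᵢ`, where `dᵢ = aᵢ e^{-λᵢ y} ≠ 0`:
if `F_y` vanishes on an open `U`, so does `Lᵏ F_y = ∑ dᵢ λᵢᵏ fᵢ` for every `k`. As the `λᵢ`
are distinct, the Vandermonde matrix `(λᵢᵏ)` is invertible, hence every `fᵢ` vanishes on `U`.
But `fᵢ` solves the linear equation `fᵢ'' = (W - λᵢ) fᵢ` with continuous coefficient, and
vanishing on an open set gives zero Cauchy data at a point, so by uniqueness for ODEs `fᵢ ≡ 0`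
on `(a, b)`.
-/

open Set NNReal

section UniqueContinuation

variable {E : Type*} [NormedAddCommGroup E] [NormedSpace ℝ E]

theorem lipschitzWith_companion (r : ℝ) :
    LipschitzWith (max 1 ‖r‖₊) (fun p : E × E => (p.2, r • p.1)) := by
  simpa using LipschitzWith.prod_snd.prodMk ((lipschitzWith_smul r).comp LipschitzWith.prod_fst)

theorem eqOn_zero_of_hasDerivAt_of_nnnorm_le {a b t₀ : ℝ} {q : ℝ → ℝ} {C : ℝ≥0}
    (hq : ∀ t ∈ Ioo a b, ‖q t‖₊ ≤ C) {f f' : ℝ → E}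
    (hf : ∀ t ∈ Ioo a b, HasDerivAt f (f' t) t)
    (hf' : ∀ t ∈ Ioo a b, HasDerivAt f' (q t • f t) t)
    (ht₀ : t₀ ∈ Ioo a b) (h₀ : f t₀ = 0) (h₀' : f' t₀ = 0) :
    EqOn f 0 (Ioo a b) := by
  have hv : ∀ t ∈ Ioo a b,
      LipschitzOnWith (max 1 C) (fun p : E × E => (p.2, q t • p.1)) univ := fun t ht =>
    ((lipschitzWith_companion (q t)).weaken (max_le_max le_rfl (hq t ht))).lipschitzOnWith
  have hsol := ODE_solution_unique_of_mem_Ioo (f := fun t => (f t, f' t)) (g := fun _ => 0)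
    hv ht₀
    (fun t ht => ⟨(hf t ht).prodMk (hf' t ht), trivial⟩)
    (fun t _ => ⟨by simpa [← Prod.zero_eq_mk] using hasDerivAt_const t (0 : E × E), trivial⟩)
    (by simp [h₀, h₀'])
  exact fun t ht => congrArg Prod.fst (hsol ht)

theorem eqOn_zero_of_hasDerivAt_of_continuousOn {a b t₀ : ℝ} {q : ℝ → ℝ}
    (hq : ContinuousOn q (Ioo a b)) {f f' : ℝ → E}
    (hf : ∀ t ∈ Ioo a b, HasDerivAt f (f' t) t)
    (hf' : ∀ t ∈ Ioo a b, HasDerivAt f' (q t • f t) t)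
    (ht₀ : t₀ ∈ Ioo a b) (h₀ : f t₀ = 0) (h₀' : f' t₀ = 0) :
    EqOn f 0 (Ioo a b) := by
  intro t ht
  -- `q` is bounded on a compact interval `[a', b'] ⊆ (a, b)` whose interior contains `t₀` and `t`.
  obtain ⟨a', ha', ha't⟩ := exists_between (lt_min ht₀.1 ht.1)
  obtain ⟨b', hb't, hb'⟩ := exists_between (max_lt ht₀.2 ht.2)
  have hsub : Icc a' b' ⊆ Ioo a b := Icc_subset_Ioo ha' hb'
  have hsub' : Ioo a' b' ⊆ Ioo a b := Ioo_subset_Icc_self.trans hsub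
  have ht₀' : t₀ ∈ Ioo a' b' :=
    ⟨(min_le_left _ _).trans_lt' ha't, (le_max_left _ _).trans_lt hb't⟩
  have ht' : t ∈ Ioo a' b' :=
    ⟨(min_le_right _ _).trans_lt' ha't, (le_max_right _ _).trans_lt hb't⟩
  obtain ⟨C, hC⟩ := isCompact_Icc.exists_bound_of_continuousOn (hq.mono hsub)
  have hqC : ∀ s ∈ Ioo a' b', ‖q s‖₊ ≤ C.toNNReal := fun s hs => by
    rw [← NNReal.coe_le_coe, coe_nnnorm]
    exact (hC s (Ioo_subset_Icc_self hs)).trans (Real.le_coe_toNNReal C)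
  exact eqOn_zero_of_hasDerivAt_of_nnnorm_le hqC (fun s hs => hf s (hsub' hs))
    (fun s hs => hf' s (hsub' hs)) ht₀' h₀ h₀' ht'

end UniqueContinuation

/-- `f` is a `(W, lam)`-eigensolution on `s`, except that `f ≢ 0` is not required. -/
def IsEigensolutionOn (W : ℝ → ℝ) (lam : ℝ) (f : ℝ → ℝ) (s : Set ℝ) : Prop :=
  ContDiffOn ℝ 2 f s ∧ ∀ x ∈ s, -deriv (deriv f) x + W x * f x = lam * f x

namespace IsEigensolutionOn

variable {W : ℝ → ℝ} {lam : ℝ} {f : ℝ → ℝ} {s : Set ℝ}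

theorem mono (hf : IsEigensolutionOn W lam f s) {t : Set ℝ} (hts : t ⊆ s) :
    IsEigensolutionOn W lam f t :=
  ⟨hf.1.mono hts, fun x hx => hf.2 x (hts hx)⟩

theorem const_mul (hf : IsEigensolutionOn W lam f s) (c : ℝ) :
    IsEigensolutionOn W lam (fun x => c * f x) s := by
  refine ⟨contDiffOn_const.mul hf.1, fun x hx => ?_⟩
  simp only [deriv_const_mul_field']
  linear_combination c * hf.2 x hx

theorem differentiableAt (hf : IsEigensolutionOn W lam f s) (hs : IsOpen s) {x : ℝ}
    (hx : x ∈ s) : DifferentiableAt ℝ f x :=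
  (hf.1.differentiableOn two_ne_zero).differentiableAt (hs.mem_nhds hx)

theorem differentiableAt_deriv (hf : IsEigensolutionOn W lam f s) (hs : IsOpen s) {x : ℝ}
    (hx : x ∈ s) : DifferentiableAt ℝ (deriv f) x :=
  ((hf.1.deriv_of_isOpen hs (by norm_num : (1 : WithTop ℕ∞) + 1 ≤ 2)).differentiableOn
    one_ne_zero).differentiableAt (hs.mem_nhds hx)

theorem eqOn_zero_of_eqOn_zero {a b : ℝ} (hf : IsEigensolutionOn W lam f (Ioo a b))
    (hW : ContinuousOn W (Ioo a b)) {U : Set ℝ} (hUab : U ⊆ Ioo a b) (hU : IsOpen U)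
    (hUne : U.Nonempty) (hfU : EqOn f 0 U) : EqOn f 0 (Ioo a b) := by
  obtain ⟨x₀, hx₀⟩ := hUne
  have hf' : EqOn (deriv f) 0 U := by simpa using hfU.deriv hU
  refine eqOn_zero_of_hasDerivAt_of_continuousOn (q := fun x => W x - lam)
    (hW.sub continuousOn_const)
    (fun t ht => (hf.differentiableAt isOpen_Ioo ht).hasDerivAt) (fun t ht => ?_)
    (hUab hx₀) (hfU hx₀) (hf' hx₀)
  rw [smul_eq_mul, show (W t - lam) * f t = deriv (deriv f) t by linarith [hf.2 t ht]]
  exact (hf.differentiableAt_deriv isOpen_Ioo ht).hasDerivAt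

end IsEigensolutionOn

section LinearIndependence

variable {W : ℝ → ℝ} {U : Set ℝ}

theorem eqOn_zero_sum_mul_of_eqOn_zero_sum {ι : Type*} {t : Finset ι} {lam : ι → ℝ}
    {g : ι → ℝ → ℝ} (hU : IsOpen U) (hg : ∀ i ∈ t, IsEigensolutionOn W (lam i) (g i) U)
    (h0 : EqOn (fun x => ∑ i ∈ t, g i x) 0 U) :
    EqOn (fun x => ∑ i ∈ t, lam i * g i x) 0 U := by
  intro x hx
  set G : ℝ → ℝ := fun x => ∑ i ∈ t, g i x
  have hG' : EqOn (deriv G) (fun z => ∑ i ∈ t, deriv (g i) z) U := fun z hz =>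
    deriv_fun_sum fun i hi => (hg i hi).differentiableAt hU hz
  have hG'' : deriv (deriv G) x = ∑ i ∈ t, deriv (deriv (g i)) x := by
    rw [hG'.deriv hU hx]
    exact deriv_fun_sum fun i hi => (hg i hi).differentiableAt_deriv hU hx
  have hG''_zero : deriv (deriv G) x = 0 := by simpa using (h0.deriv hU).deriv hU hx
  calc ∑ i ∈ t, lam i * g i x
      = ∑ i ∈ t, (-deriv (deriv (g i)) x + W x * g i x) :=
        Finset.sum_congr rfl fun i hi => ((hg i hi).2 x hx).symm
    _ = -deriv (deriv G) x + W x * G x := by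
        rw [hG'', Finset.sum_add_distrib, Finset.sum_neg_distrib, Finset.mul_sum]
    _ = 0 := by rw [hG''_zero, h0 hx]; simp

theorem eqOn_zero_sum_pow_mul_of_eqOn_zero_sum {ι : Type*} {t : Finset ι} {lam : ι → ℝ}
    {g : ι → ℝ → ℝ} (hU : IsOpen U) (hg : ∀ i ∈ t, IsEigensolutionOn W (lam i) (g i) U)
    (h0 : EqOn (fun x => ∑ i ∈ t, g i x) 0 U) (k : ℕ) :
    EqOn (fun x => ∑ i ∈ t, lam i ^ k * g i x) 0 U := by
  induction k with
  | zero => simpa using h0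
  | succ k ih =>
    simpa only [pow_succ', mul_assoc] using eqOn_zero_sum_mul_of_eqOn_zero_sum hU
      (fun i hi => (hg i hi).const_mul (lam i ^ k)) ih

theorem eqOn_zero_of_eqOn_zero_sum {M : ℕ} {lam : Fin M → ℝ} (hlam : Function.Injective lam)
    {g : Fin M → ℝ → ℝ} (hU : IsOpen U) (hg : ∀ i, IsEigensolutionOn W (lam i) (g i) U)
    (h0 : EqOn (fun x => ∑ i, g i x) 0 U) (i : Fin M) : EqOn (g i) 0 U := by
  intro x hx
  have hvanish : (fun j => g j x) = 0 := by
    refine Matrix.eq_zero_of_vecMul_eq_zero (Matrix.det_vandermonde_ne_zero_iff.mpr hlam) ?_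
    ext k
    simpa [Matrix.vecMul, dotProduct, mul_comm] using
      eqOn_zero_sum_pow_mul_of_eqOn_zero_sum hU (fun j _ => hg j) h0 k hx
  exact congrFun hvanish i

end LinearIndependence

theorem slice_not_zero_on_open_set_general
    (a b : ℝ)
    (W : ℝ → ℝ) (hW : ContDiffOn ℝ 1 W (Set.Ioo a b))
    (M : ℕ) (hM : 1 ≤ M)
    (lam : Fin M → ℝ) (hlam : StrictMono lam)
    (f : Fin M → ℝ → ℝ)
    (hf_smooth : ∀ i, ContDiffOn ℝ 2 (f i) (Set.Ioo a b))
    (hf_nonzero : ∀ i, ∃ x ∈ Set.Ioo a b, f i x ≠ 0)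
    (hf_eq : ∀ i, ∀ x ∈ Set.Ioo a b,
      -(deriv (deriv (f i)) x) + W x * f i x = lam i * f i x)
    (c : Fin M → ℝ) (hc : ∀ i, c i ≠ 0) :
    ∀ y : ℝ, ∀ U : Set ℝ, U ⊆ Set.Ioo a b → IsOpen U → U.Nonempty →
      ¬ (∀ x ∈ U, (∑ i, c i * Real.exp (-(lam i) * y) * f i x) = 0) := by
  intro y U hUab hU hUne hF
  have hf : ∀ i, IsEigensolutionOn W (lam i) (f i) (Ioo a b) := fun i =>
    ⟨hf_smooth i, hf_eq i⟩
  have hterms_zero := eqOn_zero_of_eqOn_zero_sum hlam.injective hU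
    (fun i => ((hf i).const_mul (c i * Real.exp (-(lam i) * y))).mono hUab) hF
  let i₀ : Fin M := ⟨0, hM⟩
  have hfU : EqOn (f i₀) 0 U := fun x hx =>
    (mul_eq_zero.mp (hterms_zero i₀ hx)).resolve_left (mul_ne_zero (hc i₀) (Real.exp_ne_zero _))
  obtain ⟨x, hx, hfx⟩ := hf_nonzero i₀
  exact hfx ((hf i₀).eqOn_zero_of_eqOn_zero hW.continuousOn hUab hU hUne hfU hx)

/-- every horizontal slice F_y(x) = Σ a_i e^{−λ_i y} f_i(x) of the
parabolic extension of a nontrivial linear combination of eigen-solutions does not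
vanish identically on any nonempty open subset of (a,b). -/
theorem slice_not_zero_on_open_set
    (a b : ℝ) (hab : a < b)
    (W : ℝ → ℝ) (hW : ContDiffOn ℝ 1 W (Set.Ioo a b))
    (M : ℕ) (hM : 1 ≤ M)
    (lam : Fin M → ℝ) (hlam : StrictMono lam)
    (f : Fin M → ℝ → ℝ)
    (hf_smooth : ∀ i, ContDiffOn ℝ 2 (f i) (Set.Ioo a b))
    (hf_nonzero : ∀ i, ∃ x ∈ Set.Ioo a b, f i x ≠ 0)
    (hf_eq : ∀ i, ∀ x ∈ Set.Ioo a b,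
      -(deriv (deriv (f i)) x) + W x * f i x = lam i * f i x)
    (c : Fin M → ℝ) (hc : ∀ i, c i ≠ 0) :
    ∀ y : ℝ, ∀ U : Set ℝ, U ⊆ Set.Ioo a b → IsOpen U → U.Nonempty →
      ¬ (∀ x ∈ U, (∑ i, c i * Real.exp (-(lam i) * y) * f i x) = 0) :=
  slice_not_zero_on_open_set_general a b W hW M hM lam hlam f hf_smooth hf_nonzero hf_eq c hc
end
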